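/- arXiv:1509.01977 — 4 statements merged into one kernel-verified Lean document; each statement's English description precedes it below -/
import Mathlib

section
/- The function h(x) = log(x/sin(x)) / log(e^{1 - x·cot(x)}·sin(x)/x) is strictly decreasing on (0, π/2), with range (log(π/2)/log(2e/π), 1). -/
/-!
Write `h = num / den` with `num x = log (x / sin x)` and `den x = 1 - x cot x - num x`. A direct
computation gives `num' den - num den' = -(x - sin x cos x) excess / sin² x`, where
`excess = num - (sin x - x cos x)² / (x² - x sin x cos x)`, so `h` decreases once `den > 0` and
`excess > 0` on `(0, π/2)`. Both tend to `0` at `0+` and are increasing; for `excess` this comes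
down to `2x³ sin² x - (3x - sin x cos x) sin⁴ x < (x - sin x cos x)³`, which follows from the
alternating Taylor bounds for `sin` and two polynomial inequalities in `x²`. As
`num ~ den ~ x² / 6` at `0`, `h → 1` there, while `h` is continuous at `π/2`; the range then
follows from the intermediate value theorem.
-/

open Real Set Filter Topology

theorem le_of_hasDerivAt_le {f g f' g' : ℝ → ℝ} (h0 : f 0 ≤ g 0)
    (hf : ∀ x, HasDerivAt f (f' x) x) (hg : ∀ x, HasDerivAt g (g' x) x)
    (h' : ∀ x, 0 < x → f' x ≤ g' x) {x : ℝ} (hx : 0 ≤ x) : f x ≤ g x := by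
  have hmono : MonotoneOn (g - f) (Ici 0) := by
    refine monotoneOn_of_hasDerivWithinAt_nonneg (f' := g' - f') (convex_Ici 0)
      (fun y _ ↦ ((hg y).sub (hf y)).continuousAt.continuousWithinAt)
      (fun y _ ↦ ((hg y).sub (hf y)).hasDerivWithinAt) fun y hy ↦ ?_
    rw [interior_Ici] at hy
    exact sub_nonneg.2 (h' y hy)
  have := hmono self_mem_Ici hx hx
  simp only [Pi.sub_apply] at this
  linarith

theorem strictMonoOn_Ioo_of_hasDerivAt_pos {f f' : ℝ → ℝ} {a b : ℝ}
    (hf : ∀ x ∈ Ioo a b, HasDerivAt f (f' x) x) (hf' : ∀ x ∈ Ioo a b, 0 < f' x) :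
    StrictMonoOn f (Ioo a b) :=
  strictMonoOn_of_hasDerivWithinAt_pos (convex_Ioo a b)
    (fun x hx ↦ (hf x hx).continuousAt.continuousWithinAt)
    (fun x hx ↦ (hf x (interior_subset hx)).hasDerivWithinAt)
    (fun x hx ↦ hf' x (interior_subset hx))

theorem strictAntiOn_Ioo_of_hasDerivAt_neg {f f' : ℝ → ℝ} {a b : ℝ}
    (hf : ∀ x ∈ Ioo a b, HasDerivAt f (f' x) x) (hf' : ∀ x ∈ Ioo a b, f' x < 0) :
    StrictAntiOn f (Ioo a b) :=
  strictAntiOn_of_hasDerivWithinAt_neg (convex_Ioo a b)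
    (fun x hx ↦ (hf x hx).continuousAt.continuousWithinAt)
    (fun x hx ↦ (hf x (interior_subset hx)).hasDerivWithinAt)
    (fun x hx ↦ hf' x (interior_subset hx))

theorem StrictMonoOn.lt_of_tendsto_nhdsGT {f : ℝ → ℝ} {a b l x : ℝ}
    (hf : StrictMonoOn f (Ioo a b)) (hl : Tendsto f (𝓝[>] a) (𝓝 l)) (hx : x ∈ Ioo a b) :
    l < f x := by
  obtain ⟨y, hay, hyx⟩ := exists_between hx.1
  have hy : y ∈ Ioo a b := ⟨hay, hyx.trans hx.2⟩
  calc l ≤ f y := le_of_tendsto hl <| by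
          filter_upwards [Ioo_mem_nhdsGT hay] with t ht
          exact (hf ⟨ht.1, ht.2.trans hy.2⟩ hy ht.2).le
    _ < f x := hf hy hx hyx

theorem StrictAntiOn.lt_of_tendsto_nhdsGT {f : ℝ → ℝ} {a b l x : ℝ}
    (hf : StrictAntiOn f (Ioo a b)) (hl : Tendsto f (𝓝[>] a) (𝓝 l)) (hx : x ∈ Ioo a b) :
    f x < l :=
  neg_lt_neg_iff.1 (hf.neg.lt_of_tendsto_nhdsGT hl.neg hx)

theorem StrictAntiOn.lt_of_tendsto_nhdsLT {f : ℝ → ℝ} {a b l x : ℝ}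
    (hf : StrictAntiOn f (Ioo a b)) (hl : Tendsto f (𝓝[<] b) (𝓝 l)) (hx : x ∈ Ioo a b) :
    l < f x := by
  obtain ⟨y, hxy, hyb⟩ := exists_between hx.2
  have hy : y ∈ Ioo a b := ⟨hx.1.trans hxy, hyb⟩
  calc l ≤ f y := le_of_tendsto hl <| by
          filter_upwards [Ioo_mem_nhdsLT hyb] with t ht
          exact (hf hy ⟨hy.1.trans ht.1, ht.2⟩ ht.1).le
    _ < f x := hf hx hy hxy

theorem StrictAntiOn.image_Ioo_of_tendsto {f : ℝ → ℝ} {a b la lb : ℝ} (hab : a < b)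
    (hf : StrictAntiOn f (Ioo a b)) (hc : ContinuousOn f (Ioo a b))
    (ha : Tendsto f (𝓝[>] a) (𝓝 la)) (hb : Tendsto f (𝓝[<] b) (𝓝 lb)) :
    f '' Ioo a b = Ioo lb la := by
  refine Subset.antisymm ?_ fun y hy ↦ ?_
  · rintro _ ⟨x, hx, rfl⟩
    exact ⟨hf.lt_of_tendsto_nhdsLT hb hx, hf.lt_of_tendsto_nhdsGT ha hx⟩
  obtain ⟨a', hya', ha'⟩ := ((ha.eventually (lt_mem_nhds hy.2)).and (Ioo_mem_nhdsGT hab)).exists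
  obtain ⟨b', hb'y, hb'⟩ :=
    ((hb.eventually (gt_mem_nhds hy.1)).and (Ioo_mem_nhdsLT ha'.2)).exists
  have hsub : Icc a' b' ⊆ Ioo a b := Icc_subset_Ioo ha'.1 hb'.2
  obtain ⟨x, hx, rfl⟩ := intermediate_value_Icc' hb'.1.le (hc.mono hsub) ⟨hb'y.le, hya'.le⟩
  exact ⟨x, hsub hx, rfl⟩

theorem tendsto_div_sq_of_abs_sub_le {f : ℝ → ℝ} {a C : ℝ}
    (h : ∀ x ∈ Ioo 0 1, |f x - a * x ^ 2| ≤ C * x ^ 4) :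
    Tendsto (fun x ↦ f x / x ^ 2) (𝓝[>] 0) (𝓝 a) := by
  rw [← tendsto_sub_nhds_zero_iff]
  refine squeeze_zero_norm' (a := fun x ↦ C * x ^ 2) ?_ ?_
  · filter_upwards [Ioo_mem_nhdsGT one_pos] with x hx
    have hx2 : 0 < x ^ 2 := pow_pos hx.1 2
    rw [Real.norm_eq_abs, div_sub' hx2.ne', abs_div, abs_of_pos hx2, div_le_iff₀ hx2]
    calc |f x - x ^ 2 * a| = |f x - a * x ^ 2| := by rw [mul_comm]
      _ ≤ C * x ^ 4 := h x hx
      _ = C * x ^ 2 * x ^ 2 := by ring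
  · have hc : Continuous fun x : ℝ ↦ C * x ^ 2 := by fun_prop
    exact (hc.tendsto' 0 0 (by simp)).mono_left nhdsWithin_le_nhds

theorem tendsto_zero_of_tendsto_div_sq {f : ℝ → ℝ} {a : ℝ}
    (h : Tendsto (fun x ↦ f x / x ^ 2) (𝓝[>] 0) (𝓝 a)) : Tendsto f (𝓝[>] 0) (𝓝 0) := by
  have hsq : Tendsto (fun x : ℝ ↦ x ^ 2) (𝓝[>] 0) (𝓝 0) :=
    ((continuous_pow 2).tendsto' 0 0 (by simp)).mono_left nhdsWithin_le_nhds
  refine (by simpa using h.mul hsq : Tendsto (fun x ↦ f x / x ^ 2 * x ^ 2) _ _).congr' ?_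
  filter_upwards [self_mem_nhdsWithin] with x hx
  field_simp [(mem_Ioi.1 hx).ne']

noncomputable def sinTaylor (n : ℕ) (x : ℝ) : ℝ :=
  ∑ k ∈ Finset.range n, (-1) ^ k * x ^ (2 * k + 1) / (2 * k + 1).factorial

noncomputable def cosTaylor (n : ℕ) (x : ℝ) : ℝ :=
  ∑ k ∈ Finset.range n, (-1) ^ k * x ^ (2 * k) / (2 * k).factorial

theorem hasDerivAt_sinTaylor (n : ℕ) (x : ℝ) :
    HasDerivAt (sinTaylor n) (cosTaylor n x) x := by
  unfold sinTaylor cosTaylor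
  refine HasDerivAt.fun_sum fun k _ ↦ ?_
  refine (((hasDerivAt_pow (2 * k + 1) x).const_mul ((-1 : ℝ) ^ k)).div_const
    ((2 * k + 1).factorial : ℝ)).congr_deriv ?_
  rw [Nat.factorial_succ]
  push_cast
  field_simp

theorem hasDerivAt_cosTaylor (n : ℕ) (x : ℝ) :
    HasDerivAt (cosTaylor (n + 1)) (-sinTaylor n x) x := by
  have : cosTaylor (n + 1) = fun y ↦ ∑ k ∈ Finset.range n,
      (-1 : ℝ) ^ (k + 1) * y ^ (2 * k + 2) / (2 * k + 2).factorial + 1 := by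
    ext y
    simp [cosTaylor, Finset.sum_range_succ', mul_add]
  rw [this, sinTaylor, ← Finset.sum_neg_distrib]
  refine (HasDerivAt.fun_sum fun k _ ↦ ?_).add_const 1
  refine (((hasDerivAt_pow (2 * k + 2) x).const_mul ((-1 : ℝ) ^ (k + 1))).div_const
    ((2 * k + 2).factorial : ℝ)).congr_deriv ?_
  rw [show 2 * k + 2 = (2 * k + 1) + 1 by ring, Nat.factorial_succ]
  push_cast
  field_simp
  ring

theorem neg_one_pow_mul_sin_sub_sinTaylor_nonneg_of_cos {n : ℕ}
    (hcos : ∀ x, 0 ≤ x → 0 ≤ (-1) ^ n * (cos x - cosTaylor n x)) {x : ℝ} (hx : 0 ≤ x) :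
    0 ≤ (-1) ^ n * (sin x - sinTaylor n x) :=
  le_of_hasDerivAt_le (f := fun _ ↦ 0) (by simp [sinTaylor]) (fun _ ↦ hasDerivAt_const _ _)
    (fun y ↦ ((hasDerivAt_sin y).sub (hasDerivAt_sinTaylor n y)).const_mul _)
    (fun y hy ↦ hcos y hy.le) hx

theorem neg_one_pow_mul_cos_sub_cosTaylor_nonneg (n : ℕ) {x : ℝ} (hx : 0 ≤ x) :
    0 ≤ (-1) ^ (n + 1) * (cos x - cosTaylor (n + 1) x) := by
  induction n generalizing x with
  | zero => simpa [cosTaylor] using cos_le_one x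
  | succ n ih =>
    refine le_of_hasDerivAt_le (f := fun _ ↦ 0) (by simp [cosTaylor, Finset.sum_range_succ'])
      (fun _ ↦ hasDerivAt_const _ _)
      (fun y ↦ ((hasDerivAt_cos y).sub (hasDerivAt_cosTaylor (n + 1) y)).const_mul _)
      (fun y hy ↦ ?_) hx
    have := neg_one_pow_mul_sin_sub_sinTaylor_nonneg_of_cos (fun _ h ↦ ih h) hy.le
    convert this using 1
    ring

theorem neg_one_pow_mul_sin_sub_sinTaylor_nonneg (n : ℕ) {x : ℝ} (hx : 0 ≤ x) :
    0 ≤ (-1) ^ (n + 1) * (sin x - sinTaylor (n + 1) x) :=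
  neg_one_pow_mul_sin_sub_sinTaylor_nonneg_of_cos
    (fun _ hy ↦ neg_one_pow_mul_cos_sub_cosTaylor_nonneg n hy) hx

theorem sin_le_sinTaylor_two_mul_add_one (n : ℕ) {x : ℝ} (hx : 0 ≤ x) :
    sin x ≤ sinTaylor (2 * n + 1) x := by
  have := neg_one_pow_mul_sin_sub_sinTaylor_nonneg (2 * n) hx
  rw [(odd_two_mul_add_one n).neg_one_pow] at this
  linarith

theorem sinTaylor_two_mul_add_two_le_sin (n : ℕ) {x : ℝ} (hx : 0 ≤ x) :
    sinTaylor (2 * n + 2) x ≤ sin x := by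
  have := neg_one_pow_mul_sin_sub_sinTaylor_nonneg (2 * n + 1) hx
  rw [Even.neg_one_pow ⟨n + 1, by ring⟩, one_mul, sub_nonneg] at this
  exact this

theorem sinTaylor_three (x : ℝ) : sinTaylor 3 x = x - x ^ 3 / 6 + x ^ 5 / 120 := by
  simp [sinTaylor, Finset.sum_range_succ, Nat.factorial]; ring

theorem sinTaylor_four (x : ℝ) : sinTaylor 4 x = x - x ^ 3 / 6 + x ^ 5 / 120 - x ^ 7 / 5040 := by
  simp [sinTaylor, Finset.sum_range_succ, Nat.factorial]; ring

theorem sinTaylor_five (x : ℝ) :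
    sinTaylor 5 x = x - x ^ 3 / 6 + x ^ 5 / 120 - x ^ 7 / 5040 + x ^ 9 / 362880 := by
  simp [sinTaylor, Finset.sum_range_succ, Nat.factorial]; ring

theorem sinTaylor_four_pos {x : ℝ} (hx0 : 0 < x) (hx : x ≤ 1.58) : 0 < sinTaylor 4 x := by
  have hy : x ^ 2 ≤ 2.4964 := by nlinarith
  have : 0 < 1 - x ^ 2 / 6 + (x ^ 2) ^ 2 / 120 - (x ^ 2) ^ 3 / 5040 := by
    nlinarith [sq_nonneg (x ^ 2), mul_le_mul_of_nonneg_left hy (sq_nonneg (x ^ 2))]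
  rw [sinTaylor_four]
  nlinarith [mul_pos hx0 this]

theorem sub_sinTaylor_five_two_mul_pos {x : ℝ} (hx0 : 0 < x) (hx : x ≤ 1.58) :
    0 < x - sinTaylor 5 (2 * x) / 2 := by
  have hy : x ^ 2 ≤ 2.4964 := by nlinarith
  have : 0 < 2 / 3 - 2 * x ^ 2 / 15 + 4 * (x ^ 2) ^ 2 / 315 - 2 * (x ^ 2) ^ 3 / 2835 := by
    nlinarith [sq_nonneg (x ^ 2), mul_le_mul_of_nonneg_left hy (sq_nonneg (x ^ 2))]
  rw [sinTaylor_five]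
  nlinarith [mul_pos (pow_pos hx0 3) this]

theorem cube_le_mul_sinTaylor_four_sq {x : ℝ} (hx0 : 0 < x) (hx : x ≤ 1.58) :
    x ^ 3 ≤ (3 * x - sinTaylor 5 (2 * x) / 2) * sinTaylor 4 x ^ 2 := by
  have hT : ∀ y : ℝ, 0 ≤ y → y ≤ 2.4964 → 0 < 1 - 4 / 15 * y ^ 2 + 76 / 945 * y ^ 3
      - 1153 / 90720 * y ^ 4 + 127 / 97200 * y ^ 5 - 7501 / 81648000 * y ^ 6
      + 2531 / 571536000 * y ^ 7 - 1 / 6998400 * y ^ 8 + 17 / 6001128000 * y ^ 9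
      - 1 / 36006768000 * y ^ 10 := by
    intro y hy0 hy
    have hy2 : y ^ 2 ≤ 2.4964 ^ 2 := pow_le_pow_left₀ hy0 hy 2
    have hy4 : y ^ 4 ≤ 2.4964 ^ 4 := pow_le_pow_left₀ hy0 hy 4
    have hy6 : y ^ 6 ≤ 2.4964 ^ 6 := pow_le_pow_left₀ hy0 hy 6
    have h4 : y ^ 4 ≤ 2.4964 ^ 2 * y ^ 2 := by nlinarith [sq_nonneg y]
    have h6 : y ^ 6 ≤ 2.4964 ^ 4 * y ^ 2 := by nlinarith [sq_nonneg y]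
    have h8 : y ^ 8 ≤ 2.4964 ^ 6 * y ^ 2 := by nlinarith [sq_nonneg y, sq_nonneg (y ^ 3)]
    have h10 : y ^ 10 ≤ 2.4964 ^ 8 * y ^ 2 := by nlinarith [sq_nonneg y, sq_nonneg (y ^ 4)]
    have hlow : 0 < 1 - 34948 / 100000 * y ^ 2 + 76 / 945 * y ^ 3 := by
      nlinarith [mul_nonneg (sub_nonneg.2 hy) hy0,
        mul_nonneg (mul_nonneg (sub_nonneg.2 hy) hy0) hy0,
        mul_nonneg (mul_nonneg (sub_nonneg.2 hy) (sub_nonneg.2 hy)) hy0, sq_nonneg y]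
    nlinarith [sq_nonneg y, pow_nonneg hy0 5, pow_nonneg hy0 7, pow_nonneg hy0 9]
  -- the right side minus the left side is `x³` times `hT` at `y = x²`
  have := mul_pos (pow_pos hx0 3) (hT (x ^ 2) (sq_nonneg x) (by nlinarith))
  rw [sinTaylor_four, sinTaylor_five]
  nlinarith

theorem two_mul_cube_mul_sinTaylor_sq_sub_lt {x : ℝ} (hx0 : 0 < x) (hx : x ≤ 1.58) :
    2 * x ^ 3 * sinTaylor 4 x ^ 2 - (3 * x - sinTaylor 5 (2 * x) / 2) * sinTaylor 4 x ^ 4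
      < (x - sinTaylor 5 (2 * x) / 2) ^ 3 := by
  have hD : ∀ y : ℝ, 0 ≤ y → y ≤ 2.4964 → 0 < 4 / 135 - 8 / 945 * y + 169 / 151200 * y ^ 2
      - 271 / 2268000 * y ^ 3 - 491 / 63504000 * y ^ 4 + 391 / 53581500 * y ^ 5
      - 4724113 / 2880541440000 * y ^ 6 + 636407 / 2880541440000 * y ^ 7
      - 1702291 / 86416243200000 * y ^ 8 + 348041 / 291654820800000 * y ^ 9
      - 231617 / 4839309619200000 * y ^ 10 + 2321 / 2073989836800000 * y ^ 11
      - 817 / 43553786572800000 * y ^ 12 + 31 / 152438253004800000 * y ^ 13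
      - 1 / 914629518028800000 * y ^ 14 := by
    intro y hy0 hy
    have b1 : y ^ 1 ≤ 2.4964 ^ 1 := pow_le_pow_left₀ hy0 hy 1
    have b3 : y ^ 3 ≤ 2.4964 ^ 3 := pow_le_pow_left₀ hy0 hy 3
    have b4 : y ^ 4 ≤ 2.4964 ^ 4 := pow_le_pow_left₀ hy0 hy 4
    have b6 : y ^ 6 ≤ 2.4964 ^ 6 := pow_le_pow_left₀ hy0 hy 6
    have b8 : y ^ 8 ≤ 2.4964 ^ 8 := pow_le_pow_left₀ hy0 hy 8
    have b10 : y ^ 10 ≤ 2.4964 ^ 10 := pow_le_pow_left₀ hy0 hy 10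
    have b12 : y ^ 12 ≤ 2.4964 ^ 12 := pow_le_pow_left₀ hy0 hy 12
    have b14 : y ^ 14 ≤ 2.4964 ^ 14 := pow_le_pow_left₀ hy0 hy 14
    nlinarith [sq_nonneg y, pow_nonneg hy0 5, pow_nonneg hy0 7, pow_nonneg hy0 9,
      pow_nonneg hy0 11, pow_nonneg hy0 13]
  -- the right side minus the left side is `x⁹` times `hD` at `y = x²`
  have := mul_pos (pow_pos hx0 9) (hD (x ^ 2) (sq_nonneg x) (by nlinarith))
  rw [sinTaylor_four, sinTaylor_five]
  nlinarith

theorem sin_pos_of_mem_Ioo_zero_pi_div_two {x : ℝ} (hx : x ∈ Ioo 0 (π / 2)) : 0 < sin x :=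
  sin_pos_of_mem_Ioo (Ioo_subset_Ioo_right (half_le_self pi_pos.le) hx)

theorem sin_sub_mul_cos_pos {x : ℝ} (hx0 : 0 < x) (hx : x < π / 2) : 0 < sin x - x * cos x := by
  have hc : 0 < cos x := cos_pos_of_mem_Ioo ⟨by linarith, hx⟩
  have := lt_tan hx0 hx
  rw [tan_eq_sin_div_cos, lt_div_iff₀ hc] at this
  linarith

theorem sin_sub_mul_cos_le {x : ℝ} (hx : 0 ≤ x) : sin x - x * cos x ≤ x ^ 3 / 3 := by
  refine le_of_hasDerivAt_le (by simp)
    (fun y ↦ (hasDerivAt_sin y).fun_sub ((hasDerivAt_id' y).fun_mul (hasDerivAt_cos y)))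
    (fun y ↦ (hasDerivAt_pow 3 y).div_const 3) (fun y hy ↦ ?_) hx
  nlinarith [sin_le hy.le]

theorem le_sin_sub_mul_cos {x : ℝ} (hx : 0 ≤ x) : x ^ 3 / 3 - x ^ 5 / 30 ≤ sin x - x * cos x := by
  refine le_of_hasDerivAt_le (by simp)
    (fun y ↦ ((hasDerivAt_pow 3 y).div_const 3).fun_sub ((hasDerivAt_pow 5 y).div_const 30))
    (fun y ↦ (hasDerivAt_sin y).fun_sub ((hasDerivAt_id' y).fun_mul (hasDerivAt_cos y)))
    (fun y hy ↦ ?_) hx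
  nlinarith [sin_ge_sub_cube hy.le]

theorem sin_mul_cos_lt {x : ℝ} (hx : 0 < x) : sin x * cos x < x := by
  have := sin_lt (mul_pos two_pos hx)
  rw [sin_two_mul] at this
  linarith

theorem sin_sub_mul_cos_le_sub_sin_mul_cos {x : ℝ} (hx : 0 ≤ x) :
    sin x - x * cos x ≤ x - sin x * cos x := by
  nlinarith [sin_le hx, neg_one_le_cos x]

theorem sq_sub_mul_sin_mul_cos_pos {x : ℝ} (hx : 0 < x) : 0 < x ^ 2 - x * (sin x * cos x) := by
  nlinarith [sin_mul_cos_lt hx]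

theorem two_mul_cube_mul_sin_sq_sub_lt {x : ℝ} (hx0 : 0 < x) (hx : x < π / 2) :
    2 * x ^ 3 * sin x ^ 2 - (3 * x - sin x * cos x) * sin x ^ 4 < (x - sin x * cos x) ^ 3 := by
  have hx' : x ≤ 1.58 := by linarith [pi_lt_d2]
  set σ := sinTaylor 4 x
  set P := x - sinTaylor 5 (2 * x) / 2 with hP_def
  have hσ : σ ≤ sin x := sinTaylor_two_mul_add_two_le_sin 1 hx0.le
  have hσ0 : 0 < σ := sinTaylor_four_pos hx0 hx'
  have hP : P ≤ x - sin x * cos x := by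
    have : sin (2 * x) ≤ sinTaylor 5 (2 * x) := sin_le_sinTaylor_two_mul_add_one 2 (by positivity)
    rw [sin_two_mul] at this
    linarith
  have hP0 : 0 < P := sub_sinTaylor_five_two_mul_pos hx0 hx'
  have hK : x ^ 3 ≤ (2 * x + P) * σ ^ 2 := by
    convert cube_le_mul_sinTaylor_four_sq hx0 hx' using 2; ring
  have hσs : σ ^ 2 ≤ sin x ^ 2 := pow_le_pow_left₀ hσ0.le hσ 2
  -- with `K = 2x + P`, `u ↦ 2x³ u - K u²` decreases for `u ≥ x³ / K`, and `x³ / K ≤ σ² ≤ sin² x`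
  calc 2 * x ^ 3 * sin x ^ 2 - (3 * x - sin x * cos x) * sin x ^ 4
      ≤ 2 * x ^ 3 * sin x ^ 2 - (2 * x + P) * (sin x ^ 2) ^ 2 := by
        nlinarith [pow_nonneg (sq_nonneg (sin x)) 2]
    _ ≤ 2 * x ^ 3 * σ ^ 2 - (2 * x + P) * (σ ^ 2) ^ 2 := by
        nlinarith [mul_le_mul_of_nonneg_left hσs (by linarith : 0 ≤ 2 * x + P)]
    _ < P ^ 3 := by
        convert two_mul_cube_mul_sinTaylor_sq_sub_lt hx0 hx' using 2; ring
    _ ≤ (x - sin x * cos x) ^ 3 := pow_le_pow_left₀ hP0.le hP 3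

namespace Sandor

noncomputable def num (x : ℝ) : ℝ := log (x / sin x)

noncomputable def den (x : ℝ) : ℝ := 1 - x * (cos x / sin x) - log (x / sin x)

noncomputable def excess (x : ℝ) : ℝ :=
  num x - (sin x - x * cos x) ^ 2 / (x ^ 2 - x * (sin x * cos x))

theorem den_eq_log {x : ℝ} (hx : x ≠ 0) (hs : sin x ≠ 0) :
    den x = log (exp (1 - x * (cos x / sin x)) * sin x / x) := by
  rw [den, log_div (mul_ne_zero (exp_ne_zero _) hs) hx, log_mul (exp_ne_zero _) hs, log_exp,
    log_div hx hs]
  ring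

theorem hasDerivAt_num {x : ℝ} (hx : x ≠ 0) (hs : sin x ≠ 0) :
    HasDerivAt num ((sin x - x * cos x) / (x * sin x)) x := by
  have := ((hasDerivAt_id' x).fun_div (hasDerivAt_sin x) hs).log (div_ne_zero hx hs)
  refine this.congr_deriv ?_
  field_simp

theorem hasDerivAt_den {x : ℝ} (hx : x ≠ 0) (hs : sin x ≠ 0) :
    HasDerivAt den ((x ^ 2 - sin x ^ 2) / (x * sin x ^ 2)) x := by
  have := ((hasDerivAt_const x 1).fun_sub ((hasDerivAt_id' x).fun_mul
    ((hasDerivAt_cos x).fun_div (hasDerivAt_sin x) hs))).fun_sub (hasDerivAt_num hx hs)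
  refine this.congr_deriv ?_
  field_simp
  linear_combination x ^ 2 * sin_sq_add_cos_sq x

theorem hasDerivAt_excess {x : ℝ} (hx : x ≠ 0) (hs : sin x ≠ 0)
    (hA : x - sin x * cos x ≠ 0) :
    HasDerivAt excess ((sin x - x * cos x) * ((x - sin x * cos x) ^ 3
      - (2 * x ^ 3 * sin x ^ 2 - (3 * x - sin x * cos x) * sin x ^ 4))
      / (x ^ 2 * sin x * (x - sin x * cos x) ^ 2)) x := by
  have hB : HasDerivAt (fun y ↦ (sin y - y * cos y) ^ 2)
      (2 * (sin x - x * cos x) * (x * sin x)) x := by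
    refine (((hasDerivAt_sin x).fun_sub
      ((hasDerivAt_id' x).fun_mul (hasDerivAt_cos x))).pow 2).congr_deriv ?_
    ring
  have hA' : HasDerivAt (fun y ↦ y ^ 2 - y * (sin y * cos y))
      (2 * x - (sin x * cos x + x * (cos x ^ 2 - sin x ^ 2))) x := by
    refine ((hasDerivAt_pow 2 x).fun_sub ((hasDerivAt_id' x).fun_mul
      ((hasDerivAt_sin x).fun_mul (hasDerivAt_cos x)))).congr_deriv ?_
    ring
  have hA0 : x ^ 2 - x * (sin x * cos x) ≠ 0 := by
    rw [show x ^ 2 - x * (sin x * cos x) = x * (x - sin x * cos x) by ring]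
    exact mul_ne_zero hx hA
  refine ((hasDerivAt_num hx hs).fun_sub (hB.fun_div hA' hA0)).congr_deriv ?_
  field_simp
  linear_combination (3 * x ^ 2 * sin x ^ 2 * cos x + sin x ^ 4 * cos x - x ^ 3 * sin x * cos x ^ 2
    - x * sin x ^ 3 * cos x ^ 2 - 2 * x * sin x ^ 3) * sin_sq_add_cos_sq x

theorem hasDerivAt_num_div_den {x : ℝ} (hx : x ≠ 0) (hs : sin x ≠ 0)
    (hA : x - sin x * cos x ≠ 0) (hden : den x ≠ 0) :
    HasDerivAt (fun y ↦ num y / den y)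
      (-((x - sin x * cos x) * excess x) / (sin x ^ 2 * den x ^ 2)) x := by
  refine ((hasDerivAt_num hx hs).fun_div (hasDerivAt_den hx hs) hden).congr_deriv ?_
  have hden' : den x = (sin x - x * cos x) / sin x - num x := by
    unfold den num; field_simp
  rw [excess, hden']
  field_simp
  ring

theorem abs_num_sub_le {x : ℝ} (hx : x ∈ Ioo 0 1) : |num x - x ^ 2 / 6| ≤ x ^ 4 := by
  obtain ⟨hx0, hx1⟩ := hx
  have hs : 0 < sin x := sin_pos_of_pos_of_lt_pi hx0 (by linarith [pi_gt_three])
  have h3 := sin_ge_sub_cube hx0.le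
  have h5 : sin x ≤ x - x ^ 3 / 6 + x ^ 5 / 120 :=
    sinTaylor_three x ▸ sin_le_sinTaylor_two_mul_add_one 1 hx0.le
  have hlow : 1 - sin x / x ≤ num x := by
    have := one_sub_inv_le_log_of_pos (div_pos hx0 hs)
    rwa [inv_div] at this
  have hup : num x ≤ x / sin x - 1 := log_le_sub_one_of_pos (div_pos hx0 hs)
  have hlow' : x ^ 2 / 6 - x ^ 4 ≤ 1 - sin x / x := by
    rw [one_sub_div hx0.ne', le_div_iff₀ hx0]
    nlinarith [pow_pos hx0 5]
  have hup' : x / sin x - 1 ≤ x ^ 2 / 6 + x ^ 4 := by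
    rw [div_sub_one hs.ne', div_le_iff₀ hs]
    nlinarith [mul_le_mul_of_nonneg_left h3 (by positivity : (0 : ℝ) ≤ x ^ 2 / 6 + x ^ 4),
      pow_le_pow_of_le_one hx0.le hx1.le (by norm_num : 5 ≤ 7)]
  rw [abs_le]
  constructor <;> linarith

theorem abs_one_sub_mul_cot_sub_le {x : ℝ} (hx : x ∈ Ioo 0 1) :
    |1 - x * (cos x / sin x) - x ^ 2 / 3| ≤ x ^ 4 := by
  obtain ⟨hx0, hx1⟩ := hx
  have hs : 0 < sin x := sin_pos_of_pos_of_lt_pi hx0 (by linarith [pi_gt_three])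
  have h3 := sin_ge_sub_cube hx0.le
  have hBup := sin_sub_mul_cos_le hx0.le
  have hBlow := le_sin_sub_mul_cos hx0.le
  have hu : 1 - x * (cos x / sin x) = (sin x - x * cos x) / sin x := by field_simp
  have hlow : x ^ 2 / 3 - x ^ 4 ≤ (sin x - x * cos x) / sin x := by
    rw [le_div_iff₀ hs]
    nlinarith [sin_le hx0.le, pow_pos hx0 4, pow_pos hx0 6]
  have hup : (sin x - x * cos x) / sin x ≤ x ^ 2 / 3 + x ^ 4 := by
    rw [div_le_iff₀ hs]
    nlinarith [mul_le_mul_of_nonneg_left h3 (by positivity : (0 : ℝ) ≤ x ^ 2 / 3 + x ^ 4),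
      pow_le_pow_of_le_one hx0.le hx1.le (by norm_num : 5 ≤ 7)]
  rw [hu, abs_le]
  constructor <;> linarith

theorem abs_den_sub_le {x : ℝ} (hx : x ∈ Ioo 0 1) : |den x - x ^ 2 / 6| ≤ 2 * x ^ 4 := by
  have : den x - x ^ 2 / 6 = (1 - x * (cos x / sin x) - x ^ 2 / 3) - (num x - x ^ 2 / 6) := by
    unfold den num; ring
  rw [this]
  linarith [abs_sub (1 - x * (cos x / sin x) - x ^ 2 / 3) (num x - x ^ 2 / 6),
    abs_one_sub_mul_cot_sub_le hx, abs_num_sub_le hx]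

theorem tendsto_num_div_sq : Tendsto (fun x ↦ num x / x ^ 2) (𝓝[>] 0) (𝓝 (1 / 6)) :=
  tendsto_div_sq_of_abs_sub_le (C := 1) fun x hx ↦ by
    convert abs_num_sub_le hx using 2 <;> ring

theorem tendsto_den_div_sq : Tendsto (fun x ↦ den x / x ^ 2) (𝓝[>] 0) (𝓝 (1 / 6)) :=
  tendsto_div_sq_of_abs_sub_le (C := 2) fun x hx ↦ by
    convert abs_den_sub_le hx using 2; ring

theorem sq_sin_sub_mul_cos_div_le {x : ℝ} (hx0 : 0 < x) (hx : x < π / 2) :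
    (sin x - x * cos x) ^ 2 / (x ^ 2 - x * (sin x * cos x)) ≤ x ^ 2 / 3 := by
  have hB := sin_sub_mul_cos_pos hx0 hx
  have hw := sub_pos.2 (sin_mul_cos_lt hx0)
  have hBw := sin_sub_mul_cos_le_sub_sin_mul_cos hx0.le
  have hB3 := sin_sub_mul_cos_le hx0.le
  rw [div_le_iff₀ (sq_sub_mul_sin_mul_cos_pos hx0)]
  nlinarith [mul_le_mul_of_nonneg_left hBw hB.le, mul_le_mul_of_nonneg_left hB3 (mul_pos hx0 hw).le]

theorem tendsto_excess : Tendsto excess (𝓝[>] 0) (𝓝 0) := by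
  have hsq : Tendsto (fun x : ℝ ↦ x ^ 2 / 3) (𝓝[>] 0) (𝓝 0) :=
    (((continuous_pow 2).div_const 3).tendsto' 0 0 (by simp)).mono_left nhdsWithin_le_nhds
  have hR : Tendsto (fun x ↦ (sin x - x * cos x) ^ 2 / (x ^ 2 - x * (sin x * cos x)))
      (𝓝[>] 0) (𝓝 0) := by
    refine squeeze_zero' ?_ ?_ hsq <;>
      filter_upwards [Ioo_mem_nhdsGT (by positivity : (0 : ℝ) < π / 2)] with x hx
    · exact div_nonneg (sq_nonneg _) (sq_sub_mul_sin_mul_cos_pos hx.1).le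
    · exact sq_sin_sub_mul_cos_div_le hx.1 hx.2
  have := (tendsto_zero_of_tendsto_div_sq tendsto_num_div_sq).sub hR
  rwa [sub_zero] at this

theorem strictMonoOn_den : StrictMonoOn den (Ioo 0 (π / 2)) :=
  strictMonoOn_Ioo_of_hasDerivAt_pos
    (fun _ hx ↦ hasDerivAt_den hx.1.ne' (sin_pos_of_mem_Ioo_zero_pi_div_two hx).ne')
    fun _ hx ↦ div_pos (sub_pos.2 (sin_sq_lt_sq hx.1.ne'))
      (mul_pos hx.1 (pow_pos (sin_pos_of_mem_Ioo_zero_pi_div_two hx) 2))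

theorem den_pos {x : ℝ} (hx : x ∈ Ioo 0 (π / 2)) : 0 < den x :=
  strictMonoOn_den.lt_of_tendsto_nhdsGT (tendsto_zero_of_tendsto_div_sq tendsto_den_div_sq) hx

theorem strictMonoOn_excess : StrictMonoOn excess (Ioo 0 (π / 2)) := by
  refine strictMonoOn_Ioo_of_hasDerivAt_pos (fun x hx ↦ hasDerivAt_excess hx.1.ne'
    (sin_pos_of_mem_Ioo_zero_pi_div_two hx).ne'
    (sub_pos.2 (sin_mul_cos_lt hx.1)).ne') fun x hx ↦ ?_
  have hw := sub_pos.2 (sin_mul_cos_lt hx.1)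
  exact div_pos (mul_pos (sin_sub_mul_cos_pos hx.1 hx.2)
    (sub_pos.2 (two_mul_cube_mul_sin_sq_sub_lt hx.1 hx.2)))
    (mul_pos (mul_pos (pow_pos hx.1 2) (sin_pos_of_mem_Ioo_zero_pi_div_two hx)) (pow_pos hw 2))

theorem excess_pos {x : ℝ} (hx : x ∈ Ioo 0 (π / 2)) : 0 < excess x :=
  strictMonoOn_excess.lt_of_tendsto_nhdsGT tendsto_excess hx

theorem hasDerivAt_num_div_den_of_mem {x : ℝ} (hx : x ∈ Ioo 0 (π / 2)) :
    HasDerivAt (fun y ↦ num y / den y)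
      (-((x - sin x * cos x) * excess x) / (sin x ^ 2 * den x ^ 2)) x :=
  hasDerivAt_num_div_den hx.1.ne' (sin_pos_of_mem_Ioo_zero_pi_div_two hx).ne'
    (sub_pos.2 (sin_mul_cos_lt hx.1)).ne' (den_pos hx).ne'

theorem strictAntiOn_num_div_den : StrictAntiOn (fun x ↦ num x / den x) (Ioo 0 (π / 2)) := by
  refine strictAntiOn_Ioo_of_hasDerivAt_neg (fun x hx ↦ hasDerivAt_num_div_den_of_mem hx)
    fun x hx ↦ ?_
  have hw := sub_pos.2 (sin_mul_cos_lt hx.1)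
  exact div_neg_of_neg_of_pos (neg_neg_of_pos (mul_pos hw (excess_pos hx)))
    (mul_pos (pow_pos (sin_pos_of_mem_Ioo_zero_pi_div_two hx) 2) (pow_pos (den_pos hx) 2))

theorem tendsto_num_div_den_nhdsGT_zero :
    Tendsto (fun x ↦ num x / den x) (𝓝[>] 0) (𝓝 1) := by
  have := tendsto_num_div_sq.div tendsto_den_div_sq (by norm_num)
  rw [div_self (by norm_num)] at this
  refine this.congr' ?_
  filter_upwards [self_mem_nhdsWithin] with x hx
  exact div_div_div_cancel_right₀ (pow_ne_zero 2 (ne_of_gt hx)) _ _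

theorem tendsto_num_div_den_nhdsLT_pi_div_two :
    Tendsto (fun x ↦ num x / den x) (𝓝[<] (π / 2)) (𝓝 (log (π / 2) / log (2 * exp 1 / π))) := by
  have hs : sin (π / 2) ≠ 0 := by simp
  have hden : den (π / 2) = 1 - log (π / 2) := by simp [den]
  have hden_pos : 0 < den (π / 2) := by
    linarith [log_le_sub_one_of_pos pi_div_two_pos, pi_lt_d2]
  have hcont : ContinuousAt (fun x ↦ num x / den x) (π / 2) :=
    (hasDerivAt_num pi_div_two_pos.ne' hs).continuousAt.div
      (hasDerivAt_den pi_div_two_pos.ne' hs).continuousAt hden_pos.ne'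
  have hlog : log (2 * exp 1 / π) = 1 - log (π / 2) := by
    rw [log_div (by positivity) pi_ne_zero, log_mul two_ne_zero (exp_ne_zero 1), log_exp,
      log_div pi_ne_zero two_ne_zero]
    ring
  have := hcont.tendsto.mono_left (nhdsWithin_le_nhds (s := Iio (π / 2)))
  rwa [hden, num, sin_pi_div_two, div_one, ← hlog] at this

end Sandor

theorem sandor_lemma5 :
    StrictAntiOn (fun x : ℝ =>
        log (x / sin x) / log (exp (1 - x * (cos x / sin x)) * sin x / x))
      (Ioo 0 (π/2)) ∧
    (fun x : ℝ =>
        log (x / sin x) / log (exp (1 - x * (cos x / sin x)) * sin x / x)) '' Ioo 0 (π/2) =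
      Ioo (log (π/2) / log (2 * exp 1 / π)) 1 := by
  have hEq : EqOn (fun x ↦ Sandor.num x / Sandor.den x)
      (fun x ↦ log (x / sin x) / log (exp (1 - x * (cos x / sin x)) * sin x / x))
      (Ioo 0 (π / 2)) := fun x hx ↦ by
    dsimp only
    rw [Sandor.den_eq_log hx.1.ne' (sin_pos_of_mem_Ioo_zero_pi_div_two hx).ne', Sandor.num]
  refine ⟨Sandor.strictAntiOn_num_div_den.congr hEq, ?_⟩
  rw [← hEq.image_eq]
  exact Sandor.strictAntiOn_num_div_den.image_Ioo_of_tendsto (by positivity)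
    (fun x hx ↦ (Sandor.hasDerivAt_num_div_den_of_mem hx).continuousAt.continuousWithinAt)
    Sandor.tendsto_num_div_den_nhdsGT_zero Sandor.tendsto_num_div_den_nhdsLT_pi_div_two
end

section
/- The function f(x) = x·e^{x·cot(x)-1}/sin(x) is strictly decreasing on (0, π/2), with f(x) → 1 as x → 0+ and f(x) → π/(2e) as x → π/2-. -/
/-!
On `(0, π)` we have `log f x = log x - log (sin x) + x cot x - 1`, whose derivative
`1/x - x / sin² x` is negative because `sin x < x`; so `f` decreases strictly there.
For `x ≠ 0`, `f x = u · exp (u cos x - 1)` with `u = (sinc x)⁻¹`, which is continuous wherever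
`sinc x ≠ 0`; evaluating at `0` and at `π/2` gives the two limits.
-/

open Real Set Filter Topology

noncomputable def sandorF (x : ℝ) : ℝ := x * exp (x * (cos x / sin x) - 1) / sin x

lemma hasDerivAt_log_sub_log_sin_add_mul_cot {x : ℝ} (hx : x ≠ 0) (hsin : sin x ≠ 0) :
    HasDerivAt (fun x => log x - log (sin x) + (x * (cos x / sin x) - 1))
      (x⁻¹ - x / sin x ^ 2) x := by
  have hcot : HasDerivAt (fun x => cos x / sin x) (-1 / sin x ^ 2) x := by
    refine ((hasDerivAt_cos x).div (hasDerivAt_sin x) hsin).congr_deriv ?_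
    linear_combination (-1 / sin x ^ 2) * sin_sq_add_cos_sq x
  refine (((hasDerivAt_log hx).sub ((hasDerivAt_sin x).log hsin)).add
    (((hasDerivAt_id' x).mul hcot).sub_const 1)).congr_deriv ?_
  field_simp
  ring

lemma inv_sub_div_sin_sq_neg {x : ℝ} (hx : 0 < x) (hsin : sin x ≠ 0) :
    x⁻¹ - x / sin x ^ 2 < 0 := by
  rw [sub_neg]
  calc x⁻¹ = x / x ^ 2 := by field_simp
    _ < x / sin x ^ 2 := div_lt_div_of_pos_left hx (by positivity) (sin_sq_lt_sq hx.ne')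

lemma sandorF_eq_exp {x : ℝ} (hx : 0 < x) (hsin : 0 < sin x) :
    sandorF x = exp (log x - log (sin x) + (x * (cos x / sin x) - 1)) := by
  rw [exp_add, exp_sub, exp_log hx, exp_log hsin, sandorF]
  ring

theorem strictAntiOn_sandorF : StrictAntiOn sandorF (Ioo 0 π) := by
  have hsin : ∀ x ∈ Ioo 0 π, 0 < sin x := fun x hx => sin_pos_of_pos_of_lt_pi hx.1 hx.2
  have hderiv : ∀ x ∈ Ioo 0 π, HasDerivAt _ (x⁻¹ - x / sin x ^ 2) x := fun x hx =>
    hasDerivAt_log_sub_log_sin_add_mul_cot hx.1.ne' (hsin x hx).ne'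
  have hlog := strictAntiOn_of_hasDerivWithinAt_neg (convex_Ioo 0 π)
    (fun x hx => (hderiv x hx).continuousAt.continuousWithinAt)
    (fun x hx => (hderiv x (interior_subset hx)).hasDerivWithinAt)
    (fun x hx => inv_sub_div_sin_sq_neg (interior_subset hx).1 (hsin x (interior_subset hx)).ne')
  exact (exp_strictMono.comp_strictAntiOn hlog).congr
    fun x hx => (sandorF_eq_exp hx.1 (hsin x hx)).symm

lemma sandorF_eq_of_ne_zero {x : ℝ} (hx : x ≠ 0) :
    sandorF x = (sinc x)⁻¹ * exp (cos x * (sinc x)⁻¹ - 1) := by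
  rw [sinc_of_ne_zero hx, inv_div, sandorF, mul_div_left_comm x]
  ring

lemma tendsto_sandorF {a : ℝ} (ha : sinc a ≠ 0) :
    Tendsto sandorF (𝓝[{0}ᶜ] a) (𝓝 ((sinc a)⁻¹ * exp (cos a * (sinc a)⁻¹ - 1))) := by
  have hcont : ContinuousAt (fun x => (sinc x)⁻¹ * exp (cos x * (sinc x)⁻¹ - 1)) a := by
    fun_prop (disch := exact ha)
  exact hcont.tendsto.mono_left nhdsWithin_le_nhds |>.congr'
    (eventually_nhdsWithin_of_forall fun x hx => (sandorF_eq_of_ne_zero hx).symm)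

theorem sandor_f5 :
    StrictAntiOn (fun x : ℝ => x * exp (x * (cos x / sin x) - 1) / sin x)
      (Ioo 0 (π/2)) ∧
    Tendsto (fun x : ℝ => x * exp (x * (cos x / sin x) - 1) / sin x)
      (𝓝[>] 0) (𝓝 1) ∧
    Tendsto (fun x : ℝ => x * exp (x * (cos x / sin x) - 1) / sin x)
      (𝓝[<] (π/2)) (𝓝 (π / (2 * exp 1))) := by
  show StrictAntiOn sandorF _ ∧ Tendsto sandorF _ _ ∧ Tendsto sandorF _ _
  refine ⟨strictAntiOn_sandorF.mono (Ioo_subset_Ioo_right (half_le_self pi_pos.le)), ?_, ?_⟩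
  · have h0 := tendsto_sandorF (a := 0) (by simp)
    simp only [sinc_zero, cos_zero, inv_one, one_mul, sub_self, exp_zero] at h0
    exact h0.mono_left (nhdsWithin_mono 0 fun x (hx : 0 < x) => hx.ne')
  · have hsinc : sinc (π / 2) = (π / 2)⁻¹ := by
      rw [sinc_of_ne_zero (by positivity), sin_pi_div_two, one_div]
    have hnhds : 𝓝[{0}ᶜ] (π / 2) = 𝓝 (π / 2) :=
      isOpen_compl_singleton.nhdsWithin_eq pi_div_two_pos.ne'
    have h := tendsto_sandorF (a := π / 2) (by rw [hsinc]; positivity)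
    rw [hnhds, hsinc, inv_inv, cos_pi_div_two, zero_mul, zero_sub, exp_neg] at h
    convert h.mono_left nhdsWithin_le_nhds using 2
    field_simp
end

section
/- For all x in (0, π/2), e^{(x·cot(x) - 1)/2} < sin(x)/x < e^{(log(π/2))·(x·cot(x) - 1)}. -/
/-!
Put `ℓ x = log (sin x / x)` and `v x = x cot x - 1`. Both tend to `0` as `x → 0⁺`, and
`ℓ' / v' = sin x (sin x - x cos x) / (x (x - sin x cos x))`.

Lower bound: `ℓ - v / 2` increases from `0`, since `ℓ' / v' < 1 / 2` amounts to
`2 sin² x < x² + x sin x cos x`.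

Upper bound: `log (π / 2) v - ℓ` tends to `0` at both ends of `(0, π / 2)`, and its derivative is
a positive multiple of `ℓ' / v' - log (π / 2)`. This ratio is strictly decreasing, so the function
first increases and then decreases, and is positive in between. The monotonicity of the ratio
comes down to the classical inequality `(sin x / x)³ > cos x`, which follows from
`tan x > x + x³ / 3` and `sin x > x - x³ / 6`.
-/

open Real Set Filter Topology

section PositivityFromDeriv

variable {f f' : ℝ → ℝ} {a b : ℝ}

theorem pos_of_hasDerivAt_pos_of_eq_zero (hab : a < b)
    (hf : ∀ t ∈ Icc a b, HasDerivAt f (f' t) t) (hf' : ∀ t ∈ Ioo a b, 0 < f' t)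
    (ha : f a = 0) : 0 < f b := by
  have hmono : StrictMonoOn f (Icc a b) :=
    strictMonoOn_of_hasDerivWithinAt_pos (convex_Icc a b)
      (fun t ht ↦ (hf t ht).continuousAt.continuousWithinAt)
      (fun t ht ↦ (hf t (interior_subset ht)).hasDerivWithinAt)
      (by simpa only [interior_Icc] using hf')
  simpa [ha] using hmono (left_mem_Icc.2 hab.le) (right_mem_Icc.2 hab.le) hab

theorem pos_of_hasDerivAt_neg_of_eq_zero (hab : a < b)
    (hf : ∀ t ∈ Icc a b, HasDerivAt f (f' t) t) (hf' : ∀ t ∈ Ioo a b, f' t < 0)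
    (hb : f b = 0) : 0 < f a := by
  have hanti : StrictAntiOn f (Icc a b) :=
    strictAntiOn_of_hasDerivWithinAt_neg (convex_Icc a b)
      (fun t ht ↦ (hf t ht).continuousAt.continuousWithinAt)
      (fun t ht ↦ (hf t (interior_subset ht)).hasDerivWithinAt)
      (by simpa only [interior_Icc] using hf')
  simpa [hb] using hanti (left_mem_Icc.2 hab.le) (right_mem_Icc.2 hab.le) hab

theorem pos_of_hasDerivAt_pos_of_tendsto_nhdsGT (hab : a < b)
    (hf : ∀ t ∈ Ioc a b, HasDerivAt f (f' t) t) (hf' : ∀ t ∈ Ioo a b, 0 < f' t)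
    (ha : Tendsto f (𝓝[>] a) (𝓝 0)) : 0 < f b := by
  have hmono : StrictMonoOn f (Ioc a b) :=
    strictMonoOn_of_hasDerivWithinAt_pos (convex_Ioc a b)
      (fun t ht ↦ (hf t ht).continuousAt.continuousWithinAt)
      (fun t ht ↦ (hf t (interior_subset ht)).hasDerivWithinAt)
      (by simpa only [interior_Ioc] using hf')
  have hm : (a + b) / 2 ∈ Ioc a b := ⟨by linarith, by linarith⟩
  have hm_nonneg : 0 ≤ f ((a + b) / 2) :=
    le_of_tendsto ha <| mem_of_superset (Ioo_mem_nhdsGT hm.1) fun t ht ↦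
      (hmono ⟨ht.1, ht.2.le.trans hm.2⟩ hm ht.2).le
  exact hm_nonneg.trans_lt (hmono hm (right_mem_Ioc.2 hab) (by linarith))

theorem pos_of_hasDerivAt_eq_mul_of_strictAntiOn {w φ : ℝ → ℝ}
    (hf : ∀ t ∈ Ioc a b, HasDerivAt f (w t * φ t) t) (hw : ∀ t ∈ Ioo a b, 0 < w t)
    (hφ : StrictAntiOn φ (Ioo a b)) (ha : Tendsto f (𝓝[>] a) (𝓝 0)) (hb : f b = 0)
    {x : ℝ} (hx : x ∈ Ioo a b) : 0 < f x := by
  rcases le_or_gt (φ x) 0 with hφx | hφx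
  · refine pos_of_hasDerivAt_neg_of_eq_zero hx.2 (fun t ht ↦ hf t ⟨hx.1.trans_le ht.1, ht.2⟩)
      (fun t ht ↦ ?_) hb
    have ht' : t ∈ Ioo a b := ⟨hx.1.trans ht.1, ht.2⟩
    exact mul_neg_of_pos_of_neg (hw t ht') ((hφ hx ht' ht.1).trans_le hφx)
  · refine pos_of_hasDerivAt_pos_of_tendsto_nhdsGT hx.1
      (fun t ht ↦ hf t ⟨ht.1, ht.2.trans hx.2.le⟩) (fun t ht ↦ ?_) ha
    have ht' : t ∈ Ioo a b := ⟨ht.1, ht.2.trans hx.2⟩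
    exact mul_pos (hw t ht') (hφx.trans (hφ ht' hx ht.2))

end PositivityFromDeriv

section TrigBounds

variable {x : ℝ}

theorem sin_pos_of_mem_Ioc_zero_pi_div_two (hx : x ∈ Ioc 0 (π / 2)) : 0 < sin x :=
  sin_pos_of_pos_of_lt_pi hx.1 (by linarith [hx.2, pi_pos])

theorem cos_pos_of_mem_Ico_zero_pi_div_two (hx : x ∈ Ico 0 (π / 2)) : 0 < cos x :=
  cos_pos_of_mem_Ioo ⟨by linarith [hx.1, pi_pos], hx.2⟩

theorem sin_mul_cos_lt_self (hx : 0 < x) : sin x * cos x < x := by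
  have := sin_lt (by positivity : 0 < 2 * x)
  rw [sin_two_mul] at this
  linarith

theorem mul_sub_sin_mul_cos_pos (hx : 0 < x) : 0 < x * (x - sin x * cos x) :=
  mul_pos hx (sub_pos.2 (sin_mul_cos_lt_self hx))

theorem mul_cos_lt_sin (hx : x ∈ Ioo 0 (π / 2)) : x * cos x < sin x := by
  have hc := cos_pos_of_mem_Ico_zero_pi_div_two ⟨hx.1.le, hx.2⟩
  have := lt_tan hx.1 hx.2
  rwa [tan_eq_sin_div_cos, lt_div_iff₀ hc] at this

theorem add_cube_div_three_lt_tan (hx : x ∈ Ioo 0 (π / 2)) : x + x ^ 3 / 3 < tan x := by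
  suffices 0 < tan x - x - x ^ 3 / 3 by linarith
  refine pos_of_hasDerivAt_pos_of_eq_zero (f := fun t ↦ tan t - t - t ^ 3 / 3)
    (f' := fun t ↦ 1 / cos t ^ 2 - 1 - t ^ 2) hx.1 (fun t ht ↦ ?_) (fun t ht ↦ ?_) (by simp)
  · have hc := cos_pos_of_mem_Ico_zero_pi_div_two ⟨ht.1, ht.2.trans_lt hx.2⟩
    exact (((hasDerivAt_tan hc.ne').sub (hasDerivAt_id t)).sub
      ((hasDerivAt_pow 3 t).div_const 3)).congr_deriv (by simp)
  · have ht' : t ∈ Ioo 0 (π / 2) := ⟨ht.1, ht.2.trans hx.2⟩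
    have hc := cos_pos_of_mem_Ico_zero_pi_div_two ⟨ht.1.le, ht'.2⟩
    have htan : tan t ^ 2 = 1 / cos t ^ 2 - 1 := by
      rw [tan_eq_sin_div_cos]; field_simp; linarith [sin_sq_add_cos_sq t]
    have := pow_lt_pow_left₀ (lt_tan ht'.1 ht'.2) ht'.1.le two_ne_zero
    linarith

theorem three_mul_sq_lt_tan_sq_add_two_mul_sin_sq (hx : x ∈ Ioo 0 (π / 2)) :
    3 * x ^ 2 < tan x ^ 2 + 2 * sin x ^ 2 := by
  have htan := add_cube_div_three_lt_tan hx
  have hsin := sin_gt_sub_cube hx.1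
  have hx2 : x ^ 2 < 6 := by nlinarith [pi_le_four, hx.1, hx.2]
  have hsin_pos : 0 < x - x ^ 3 / 6 := by nlinarith [mul_pos hx.1 (sub_pos.2 hx2)]
  have htan_pos : 0 ≤ x + x ^ 3 / 3 := by nlinarith [pow_pos hx.1 3]
  nlinarith [mul_self_lt_mul_self hsin_pos.le hsin, mul_self_lt_mul_self htan_pos htan,
    pow_pos hx.1 6]

theorem cube_mul_cos_lt_sin_cube (hx : x ∈ Ioo 0 (π / 2)) : x ^ 3 * cos x < sin x ^ 3 := by
  have hc := cos_pos_of_mem_Ico_zero_pi_div_two ⟨hx.1.le, hx.2⟩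
  suffices 0 < tan x * sin x ^ 2 - x ^ 3 by
    rw [tan_eq_sin_div_cos] at this
    have := mul_lt_mul_of_pos_right (sub_pos.1 this) hc
    field_simp at this
    linarith
  refine pos_of_hasDerivAt_pos_of_eq_zero (f := fun t ↦ tan t * sin t ^ 2 - t ^ 3)
    (f' := fun t ↦ tan t ^ 2 + 2 * sin t ^ 2 - 3 * t ^ 2) hx.1 (fun t ht ↦ ?_)
    (fun t ht ↦ ?_) (by simp)
  · have hc := cos_pos_of_mem_Ico_zero_pi_div_two ⟨ht.1, ht.2.trans_lt hx.2⟩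
    exact (((hasDerivAt_tan hc.ne').mul ((hasDerivAt_sin t).pow 2)).sub
      (hasDerivAt_pow 3 t)).congr_deriv (by
        simp only [Pi.pow_apply, tan_eq_sin_div_cos]
        field_simp
        ring)
  · linarith [three_mul_sq_lt_tan_sq_add_two_mul_sin_sq ⟨ht.1, ht.2.trans hx.2⟩]

theorem two_mul_sin_sq_lt (hx : x ∈ Ioo 0 (π / 2)) :
    2 * sin x ^ 2 < x ^ 2 + x * sin x * cos x := by
  have hderiv_pos : ∀ t ∈ Ioo 0 (π / 2),
      0 < 2 * t + t * (cos t ^ 2 - sin t ^ 2) - 3 * (sin t * cos t) := by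
    intro t ht
    refine pos_of_hasDerivAt_pos_of_eq_zero
      (f := fun y ↦ 2 * y + y * (cos y ^ 2 - sin y ^ 2) - 3 * (sin y * cos y))
      (f' := fun y ↦ 4 * sin y * (sin y - y * cos y)) ht.1 (fun y _ ↦ ?_) (fun y hy ↦ ?_)
      (by simp)
    · exact ((((hasDerivAt_id y).const_mul 2).add ((hasDerivAt_id y).mul
        (((hasDerivAt_cos y).pow 2).sub ((hasDerivAt_sin y).pow 2)))).sub
        (((hasDerivAt_sin y).mul (hasDerivAt_cos y)).const_mul 3)).congr_deriv (by
          simp only [id_eq, Pi.sub_apply, Pi.pow_apply]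
          linear_combination (-2) * sin_sq_add_cos_sq y)
    · have hy' : y ∈ Ioo 0 (π / 2) := ⟨hy.1, hy.2.trans ht.2⟩
      have := sin_pos_of_mem_Ioc_zero_pi_div_two ⟨hy'.1, hy'.2.le⟩
      have := sub_pos.2 (mul_cos_lt_sin hy')
      positivity
  suffices 0 < x ^ 2 + x * sin x * cos x - 2 * sin x ^ 2 by linarith
  refine pos_of_hasDerivAt_pos_of_eq_zero
    (f := fun y ↦ y ^ 2 + y * sin y * cos y - 2 * sin y ^ 2)
    (f' := fun y ↦ 2 * y + y * (cos y ^ 2 - sin y ^ 2) - 3 * (sin y * cos y)) hx.1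
    (fun y _ ↦ ?_) (fun y hy ↦ hderiv_pos y ⟨hy.1, hy.2.trans hx.2⟩) (by simp)
  exact ((((hasDerivAt_pow 2 y).add (((hasDerivAt_id y).mul (hasDerivAt_sin y)).mul
    (hasDerivAt_cos y))).sub (((hasDerivAt_sin y).pow 2).const_mul 2))).congr_deriv
    (by simp only [id_eq, Pi.mul_apply]; ring)

theorem sin_cube_mul_cos_add_lt (hx : x ∈ Ioo 0 (π / 2)) :
    sin x ^ 3 * cos x + 3 * x ^ 2 * sin x * cos x
      < x ^ 3 * (cos x ^ 2 - sin x ^ 2) + 3 * x * sin x ^ 2 := by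
  suffices 0 < x ^ 3 * (cos x ^ 2 - sin x ^ 2) + 3 * x * sin x ^ 2
      - (sin x ^ 3 * cos x + 3 * x ^ 2 * sin x * cos x) by linarith
  refine pos_of_hasDerivAt_pos_of_eq_zero
    (f := fun t ↦ t ^ 3 * (cos t ^ 2 - sin t ^ 2) + 3 * t * sin t ^ 2
      - (sin t ^ 3 * cos t + 3 * t ^ 2 * sin t * cos t))
    (f' := fun t ↦ 4 * sin t * (sin t ^ 3 - t ^ 3 * cos t)) hx.1 (fun t _ ↦ ?_)
    (fun t ht ↦ ?_) (by simp)
  · have hs2 := (hasDerivAt_sin t).pow 2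
    exact ((((hasDerivAt_pow 3 t).mul (((hasDerivAt_cos t).pow 2).sub hs2)).add
      (((hasDerivAt_id t).const_mul 3).mul hs2)).sub
      ((((hasDerivAt_sin t).pow 3).mul (hasDerivAt_cos t)).add
      ((((hasDerivAt_pow 2 t).const_mul 3).mul (hasDerivAt_sin t)).mul
        (hasDerivAt_cos t)))).congr_deriv (by
          simp only [id_eq, Pi.sub_apply, Pi.pow_apply, Pi.mul_apply]
          linear_combination (-3 * sin t ^ 2) * sin_sq_add_cos_sq t)
  · have ht' : t ∈ Ioo 0 (π / 2) := ⟨ht.1, ht.2.trans hx.2⟩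
    have := sin_pos_of_mem_Ioc_zero_pi_div_two ⟨ht'.1, ht'.2.le⟩
    have := sub_pos.2 (cube_mul_cos_lt_sin_cube ht')
    positivity

end TrigBounds

section LogSinDiv

variable {x : ℝ}

theorem hasDerivAt_log_sin_div (hx : x ≠ 0) (hs : sin x ≠ 0) :
    HasDerivAt (fun y ↦ log (sin y / y))
      (-(sin x * (sin x - x * cos x)) / (x * sin x ^ 2)) x :=
  ((hasDerivAt_sin x).div (hasDerivAt_id x) hx).log (div_ne_zero hs hx) |>.congr_deriv (by
    simp only [id_eq, Pi.div_apply]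
    field_simp
    ring)

theorem hasDerivAt_mul_cot_sub_one (hx : x ≠ 0) (hs : sin x ≠ 0) :
    HasDerivAt (fun y ↦ y * (cos y / sin y) - 1)
      (-(x * (x - sin x * cos x)) / (x * sin x ^ 2)) x :=
  (((hasDerivAt_id x).mul ((hasDerivAt_cos x).div (hasDerivAt_sin x) hs)).sub_const 1)
    |>.congr_deriv (by
      simp only [id_eq, Pi.div_apply]
      field_simp
      linear_combination (-x) * sin_sq_add_cos_sq x)

theorem tendsto_sin_div_self_nhdsGT_zero : Tendsto (fun x ↦ sin x / x) (𝓝[>] 0) (𝓝 1) := by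
  have h := (continuous_sinc.tendsto 0).mono_left (nhdsWithin_le_nhds (s := Ioi 0))
  rw [sinc_zero] at h
  exact h.congr' (eventually_nhdsWithin_of_forall fun x hx ↦ sinc_of_ne_zero (ne_of_gt hx))

theorem tendsto_log_sin_div_nhdsGT_zero :
    Tendsto (fun x ↦ log (sin x / x)) (𝓝[>] 0) (𝓝 0) := by
  have h := (continuousAt_log one_ne_zero).tendsto.comp tendsto_sin_div_self_nhdsGT_zero
  rwa [log_one] at h

theorem tendsto_mul_cot_sub_one_nhdsGT_zero :
    Tendsto (fun x ↦ x * (cos x / sin x) - 1) (𝓝[>] 0) (𝓝 0) := by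
  have hcos : Tendsto cos (𝓝[>] 0) (𝓝 1) := by
    simpa using (continuous_cos.tendsto 0).mono_left nhdsWithin_le_nhds
  have h := (hcos.div tendsto_sin_div_self_nhdsGT_zero one_ne_zero).sub_const 1
  rw [div_one, sub_self] at h
  refine h.congr' (eventually_nhdsWithin_of_forall fun x hx ↦ ?_)
  have : x ≠ 0 := ne_of_gt hx
  simp only [Pi.div_apply]
  field_simp

theorem strictAntiOn_log_sin_div_deriv_ratio :
    StrictAntiOn (fun x ↦ (sin x * (sin x - x * cos x)) / (x * (x - sin x * cos x)))
      (Ioo 0 (π / 2)) := by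
  have hderiv : ∀ x ∈ Ioo (0 : ℝ) (π / 2), HasDerivAt
      (fun x ↦ (sin x * (sin x - x * cos x)) / (x * (x - sin x * cos x)))
      ((sin x ^ 3 * cos x + 3 * x ^ 2 * sin x * cos x
        - (x ^ 3 * (cos x ^ 2 - sin x ^ 2) + 3 * x * sin x ^ 2))
        / (x * (x - sin x * cos x)) ^ 2) x := fun x hx ↦
    (((hasDerivAt_sin x).mul ((hasDerivAt_sin x).sub ((hasDerivAt_id x).mul
      (hasDerivAt_cos x)))).div ((hasDerivAt_id x).mul ((hasDerivAt_id x).sub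
      ((hasDerivAt_sin x).mul (hasDerivAt_cos x)))) (mul_sub_sin_mul_cos_pos hx.1).ne')
      |>.congr_deriv (by
        simp only [id_eq, Pi.mul_apply, Pi.sub_apply]
        congr 1
        linear_combination (-x * sin x ^ 2) * sin_sq_add_cos_sq x)
  refine strictAntiOn_of_hasDerivWithinAt_neg (convex_Ioo 0 (π / 2))
    (fun x hx ↦ (hderiv x hx).continuousAt.continuousWithinAt)
    (fun x hx ↦ (hderiv x (interior_subset hx)).hasDerivWithinAt) (fun x hx ↦ ?_)
  rw [interior_Ioo] at hx
  exact div_neg_of_neg_of_pos (sub_neg.2 (sin_cube_mul_cos_add_lt hx))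
    (pow_pos (mul_sub_sin_mul_cos_pos hx.1) 2)

theorem mul_cot_sub_one_div_two_lt_log_sin_div (hx : x ∈ Ioo 0 (π / 2)) :
    (x * (cos x / sin x) - 1) / 2 < log (sin x / x) := by
  suffices 0 < log (sin x / x) - (x * (cos x / sin x) - 1) / 2 by linarith
  refine pos_of_hasDerivAt_pos_of_tendsto_nhdsGT
    (f := fun t ↦ log (sin t / t) - (t * (cos t / sin t) - 1) / 2)
    (f' := fun t ↦ (t ^ 2 + t * sin t * cos t - 2 * sin t ^ 2) / (2 * (t * sin t ^ 2))) hx.1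
    (fun t ht ↦ ?_) (fun t ht ↦ ?_) ?_
  · have hs := sin_pos_of_mem_Ioc_zero_pi_div_two ⟨ht.1, ht.2.trans hx.2.le⟩
    exact ((hasDerivAt_log_sin_div ht.1.ne' hs.ne').sub
      ((hasDerivAt_mul_cot_sub_one ht.1.ne' hs.ne').div_const 2)).congr_deriv (by
        field_simp
        ring)
  · have ht' : t ∈ Ioo 0 (π / 2) := ⟨ht.1, ht.2.trans hx.2⟩
    have := sin_pos_of_mem_Ioc_zero_pi_div_two ⟨ht'.1, ht'.2.le⟩
    have := sub_pos.2 (two_mul_sin_sq_lt ht')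
    have := ht.1
    positivity
  · simpa using tendsto_log_sin_div_nhdsGT_zero.sub
      (tendsto_mul_cot_sub_one_nhdsGT_zero.div_const 2)

theorem log_sin_div_lt_log_mul_mul_cot_sub_one (hx : x ∈ Ioo 0 (π / 2)) :
    log (sin x / x) < log (π / 2) * (x * (cos x / sin x) - 1) := by
  suffices 0 < log (π / 2) * (x * (cos x / sin x) - 1) - log (sin x / x) by linarith
  refine pos_of_hasDerivAt_eq_mul_of_strictAntiOn
    (f := fun t ↦ log (π / 2) * (t * (cos t / sin t) - 1) - log (sin t / t))
    (w := fun t ↦ t * (t - sin t * cos t) / (t * sin t ^ 2))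
    (φ := fun t ↦ sin t * (sin t - t * cos t) / (t * (t - sin t * cos t)) - log (π / 2))
    (fun t ht ↦ ?_) (fun t ht ↦ ?_) ?_ ?_ ?_ hx
  · have hs := sin_pos_of_mem_Ioc_zero_pi_div_two ht
    have := ht.1.ne'
    have := (sub_pos.2 (sin_mul_cos_lt_self ht.1)).ne'
    exact (((hasDerivAt_mul_cot_sub_one ht.1.ne' hs.ne').const_mul (log (π / 2))).sub
      (hasDerivAt_log_sin_div ht.1.ne' hs.ne')).congr_deriv (by
        field_simp
        ring)
  · have := sin_pos_of_mem_Ioc_zero_pi_div_two ⟨ht.1, ht.2.le⟩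
    have := mul_sub_sin_mul_cos_pos ht.1
    have := ht.1
    positivity
  · exact fun a ha b hb hab ↦
      sub_lt_sub_right (strictAntiOn_log_sin_div_deriv_ratio ha hb hab) _
  · simpa using (tendsto_mul_cot_sub_one_nhdsGT_zero.const_mul (log (π / 2))).sub
      tendsto_log_sin_div_nhdsGT_zero
  · simp [log_div, pi_pos.ne']

end LogSinDiv

theorem sin_div_exp_bounds (x : ℝ) (hx : x ∈ Ioo 0 (π/2)) :
    exp ((x * (cos x / sin x) - 1) / 2) < sin x / x ∧
    sin x / x < exp (log (π/2) * (x * (cos x / sin x) - 1)) := by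
  have hpos : 0 < sin x / x := div_pos (sin_pos_of_mem_Ioc_zero_pi_div_two ⟨hx.1, hx.2.le⟩) hx.1
  exact ⟨(lt_log_iff_exp_lt hpos).1 (mul_cot_sub_one_div_two_lt_log_sin_div hx),
    (log_lt_iff_lt_exp hpos).1 (log_sin_div_lt_log_mul_mul_cot_sub_one hx)⟩
end

section
/- For all x in (0, π/2), ((1 + cos(x))/2)^{2/3} < sin(x)/x < ((1 + cos(x))/2)^{log(π/2)/log 2}. -/
open Real Set Filter Topology

/-!
With `t = x / 2` the left inequality becomes `t ^ 3 * cos t < sin t ^ 3`, which follows from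
`t - t ^ 3 / 6 ≤ sin t` and `cos t ≤ 1 - t ^ 2 / 2 + t ^ 4 / 24`.

For the right inequality let `c = log (π / 2) / log 2` and
`F x = c * log ((1 + cos x) / 2) - log (sin x / x)` (`logGap`), which vanishes at `0` and at
`π / 2`. Its derivative is `Φ x / (x * sin x)` with `Φ x = sin x - x * cos x - c * x * (1 - cos x)`
(`logGapNumer`). Writing `x = 2 v`, `Φ'` has the sign of `2 (1 - c) / c - tan v / v`, and
`tan v / v` increases since `tan` is convex; so `Φ'` changes sign once. As `Φ 0 = 0 > Φ (π / 2)`,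
`Φ` is positive and then negative, hence `F` increases and then decreases, and is therefore
positive on `(0, π / 2)`.
-/

lemma cos_le_one_sub_sq_div_two_add {t : ℝ} (ht : 0 ≤ t) (ht2 : t ≤ 2) :
    cos t ≤ 1 - t ^ 2 / 2 + t ^ 4 / 24 := by
  obtain ⟨s, rfl⟩ : ∃ s, t = 2 * s := ⟨t / 2, by ring⟩
  have hs : 0 ≤ s := by linarith
  have hsin : s - s ^ 3 / 6 ≤ sin s := sin_ge_sub_cube hs
  have hsq : (s - s ^ 3 / 6) ^ 2 ≤ sin s ^ 2 :=
    pow_le_pow_left₀ (by nlinarith [mul_nonneg hs (by nlinarith : (0 : ℝ) ≤ 6 - s ^ 2)]) hsin 2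
  rw [cos_two_mul_eq_one_sub]
  nlinarith [pow_nonneg hs 6]

lemma pow_three_mul_cos_lt_sin_pow_three {t : ℝ} (ht : 0 < t) (ht2 : t ≤ 2) :
    t ^ 3 * cos t < sin t ^ 3 := by
  have hsin : (t - t ^ 3 / 6) ^ 3 ≤ sin t ^ 3 :=
    pow_le_pow_left₀ (by nlinarith [mul_nonneg ht.le (by nlinarith : (0 : ℝ) ≤ 6 - t ^ 2)])
      (sin_ge_sub_cube ht.le) 3
  have hgap : 0 < t ^ 7 * (9 - t ^ 2) := mul_pos (pow_pos ht 7) (by nlinarith)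
  calc t ^ 3 * cos t ≤ t ^ 3 * (1 - t ^ 2 / 2 + t ^ 4 / 24) := by
        gcongr; exact cos_le_one_sub_sq_div_two_add ht.le ht2
    _ < (t - t ^ 3 / 6) ^ 3 := by linear_combination hgap / 216
    _ ≤ sin t ^ 3 := hsin

lemma one_add_cos_div_two_rpow_lt_sin_div_self {x : ℝ} (hx : 0 < x) (hxπ : x < π) :
    ((1 + cos x) / 2) ^ ((2 : ℝ) / 3) < sin x / x := by
  obtain ⟨t, rfl⟩ : ∃ t, x = 2 * t := ⟨x / 2, by ring⟩
  have ht : 0 < t := by linarith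
  have hcos : 0 < cos t := cos_pos_of_mem_Ioo ⟨by linarith, by linarith⟩
  have hsin : 0 < sin t := sin_pos_of_pos_of_lt_pi ht (by linarith)
  have hA : (1 + cos (2 * t)) / 2 = cos t ^ 2 := by rw [cos_sq t]; ring
  have hB : sin (2 * t) / (2 * t) = sin t * cos t / t := by rw [sin_two_mul]; field_simp
  have hcube : ((1 + cos (2 * t)) / 2) ^ 2 < (sin (2 * t) / (2 * t)) ^ 3 := by
    rw [hA, hB, div_pow, lt_div_iff₀ (by positivity)]
    have := pow_three_mul_cos_lt_sin_pow_three ht (by linarith [pi_lt_four])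
    calc (cos t ^ 2) ^ 2 * t ^ 3 = t ^ 3 * cos t * cos t ^ 3 := by ring
      _ < sin t ^ 3 * cos t ^ 3 := by gcongr
      _ = (sin t * cos t) ^ 3 := by ring
  have h23 : ((1 + cos (2 * t)) / 2) ^ ((2 : ℝ) / 3) =
      (((1 + cos (2 * t)) / 2) ^ 2) ^ (3 : ℝ)⁻¹ := by
    rw [← rpow_natCast, ← rpow_mul (by rw [hA]; positivity)]; norm_num
  rw [h23, rpow_inv_lt_iff_of_pos (by positivity) (by rw [hB]; positivity) three_pos]
  exact_mod_cast hcube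

lemma pos_of_strictMonoOn_of_strictAntiOn {g : ℝ → ℝ} {a m b : ℝ}
    (hmono : StrictMonoOn g (Icc a m)) (hanti : StrictAntiOn g (Icc m b))
    (ha : 0 ≤ g a) (hb : 0 ≤ g b) {x : ℝ} (hx : x ∈ Ioo a b) : 0 < g x := by
  rcases le_or_gt x m with hxm | hmx
  · exact ha.trans_lt (hmono ⟨le_rfl, hx.1.le.trans hxm⟩ ⟨hx.1.le, hxm⟩ hx.1)
  · exact hb.trans_lt (hanti ⟨hmx.le, hx.2.le⟩ ⟨hmx.le.trans hx.2.le, le_rfl⟩ hx.2)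

lemma exists_pos_neg_of_strictMonoOn_of_strictAntiOn {g : ℝ → ℝ} {a m b : ℝ}
    (hmono : StrictMonoOn g (Icc a m)) (hanti : StrictAntiOn g (Icc m b))
    (hcont : ContinuousOn g (Icc m b)) (ham : a < m) (hmb : m ≤ b)
    (ha : 0 ≤ g a) (hb : g b < 0) :
    ∃ x₀ ∈ Ioo m b, (∀ x ∈ Ioo a x₀, 0 < g x) ∧ ∀ x ∈ Ioo x₀ b, g x < 0 := by
  have hm : 0 < g m := ha.trans_lt (hmono ⟨le_rfl, ham.le⟩ ⟨ham.le, le_rfl⟩ ham)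
  obtain ⟨x₀, hx₀, hgx₀⟩ := intermediate_value_Ioo' hmb hcont ⟨hb, hm⟩
  refine ⟨x₀, hx₀, fun x hx => ?_, fun x hx => ?_⟩
  · rcases le_or_gt x m with hxm | hmx
    · exact ha.trans_lt (hmono ⟨le_rfl, ham.le⟩ ⟨hx.1.le, hxm⟩ hx.1)
    · exact hgx₀ ▸ hanti ⟨hmx.le, hx.2.le.trans hx₀.2.le⟩ ⟨hx₀.1.le, hx₀.2.le⟩ hx.2
  · exact hgx₀ ▸ hanti ⟨hx₀.1.le, hx₀.2.le⟩ ⟨hx₀.1.le.trans hx.1.le, hx.2.le⟩ hx.1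

lemma strictMonoOn_strictAntiOn_of_hasDerivAt {g g' : ℝ → ℝ} {a m b : ℝ}
    (hcont : ContinuousOn g (Icc a b)) (hg : ∀ x ∈ Ioo a b, HasDerivAt g (g' x) x)
    (hpos : ∀ x ∈ Ioo a m, 0 < g' x) (hneg : ∀ x ∈ Ioo m b, g' x < 0)
    (ham : a ≤ m) (hmb : m ≤ b) :
    StrictMonoOn g (Icc a m) ∧ StrictAntiOn g (Icc m b) := by
  constructor
  · refine strictMonoOn_of_deriv_pos (convex_Icc a m) (hcont.mono (Icc_subset_Icc_right hmb))
      fun x hx => ?_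
    rw [interior_Icc] at hx
    rw [(hg x ⟨hx.1, hx.2.trans_le hmb⟩).deriv]
    exact hpos x hx
  · refine strictAntiOn_of_deriv_neg (convex_Icc m b) (hcont.mono (Icc_subset_Icc_left ham))
      fun x hx => ?_
    rw [interior_Icc] at hx
    rw [(hg x ⟨ham.trans_lt hx.1, hx.2⟩).deriv]
    exact hneg x hx

lemma strictConvexOn_tan : StrictConvexOn ℝ (Ico 0 (π / 2)) tan := by
  have hcos : ∀ x ∈ Ico 0 (π / 2), 0 < cos x :=
    fun x hx => cos_pos_of_mem_Ioo ⟨by linarith [pi_pos, hx.1], hx.2⟩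
  refine StrictMonoOn.strictConvexOn_of_deriv (convex_Ico 0 (π / 2))
    (continuousOn_tan.mono fun x hx => (hcos x hx).ne') ?_
  rw [interior_Ico]
  intro a ha b hb hab
  have hb' := hcos b (Ioo_subset_Ico_self hb)
  have hba : cos b < cos a := cos_lt_cos_of_nonneg_of_le_pi_div_two ha.1.le hb.2.le hab
  simp only [deriv_tan]
  gcongr

lemma strictMonoOn_tan_div_self : StrictMonoOn (fun v => tan v / v) (Ioo 0 (π / 2)) := by
  intro x hx y hy hxy
  simpa using strictConvexOn_tan.secant_strict_mono ⟨le_rfl, by positivity⟩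
    (Ioo_subset_Ico_self hx) (Ioo_subset_Ico_self hy) hx.1.ne' hy.1.ne' hxy

lemma exists_tan_div_self_eq {K : ℝ} (hK : 50 / 49 < K) (hK' : K < 4 / π) :
    ∃ v ∈ Ioo (1 / 5) (π / 4), tan v / v = K := by
  have hcos : ∀ v ∈ Icc (1 / 5 : ℝ) (π / 4), cos v ≠ 0 := fun v hv =>
    (cos_pos_of_mem_Ioo ⟨by linarith [pi_pos, hv.1], by linarith [pi_pos, hv.2]⟩).ne'
  have hcont : ContinuousOn (fun v => tan v / v) (Icc (1 / 5) (π / 4)) :=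
    (continuousOn_tan.mono hcos).div continuousOn_id fun v hv => by linarith [hv.1]
  have hleft : tan (1 / 5) / (1 / 5) < 50 / 49 := by
    have hc : 49 / 50 ≤ cos (1 / 5) := by linarith [one_sub_sq_div_two_le_cos (x := 1 / 5)]
    have hs : sin (1 / 5) < 1 / 5 := sin_lt (by norm_num)
    rw [tan_eq_sin_div_cos, div_div, div_lt_iff₀ (by positivity)]
    nlinarith
  have hright : tan (π / 4) / (π / 4) = 4 / π := by rw [tan_pi_div_four]; field_simp
  exact intermediate_value_Ioo (by linarith [pi_gt_three]) hcont ⟨hleft.trans hK, hright ▸ hK'⟩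

noncomputable def logGapNumer (c x : ℝ) : ℝ := sin x - x * cos x - c * (x * (1 - cos x))

lemma hasDerivAt_logGapNumer (c x : ℝ) :
    HasDerivAt (logGapNumer c) ((1 - c) * (x * sin x) - c * (1 - cos x)) x := by
  refine (((hasDerivAt_sin x).sub ((hasDerivAt_id x).mul (hasDerivAt_cos x))).sub
    (((hasDerivAt_id x).mul ((hasDerivAt_cos x).const_sub 1)).const_mul c)).congr_deriv ?_
  simp only [id]
  ring

lemma continuous_logGapNumer (c : ℝ) : Continuous (logGapNumer c) :=
  continuous_iff_continuousAt.2 fun x => (hasDerivAt_logGapNumer c x).continuousAt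

lemma deriv_logGapNumer_two_mul_eq {c v : ℝ} (hc : c ≠ 0) (hv : v ≠ 0) (hcos : cos v ≠ 0) :
    (1 - c) * (2 * v * sin (2 * v)) - c * (1 - cos (2 * v)) =
      2 * c * v * sin v * cos v * (2 * (1 - c) / c - tan v / v) := by
  rw [sin_two_mul, cos_two_mul_eq_one_sub, tan_eq_sin_div_cos]
  field_simp
  ring

lemma exists_deriv_logGapNumer_sign_change {c : ℝ} (hc : 16 / 25 < c) (hc' : c < 33 / 50) :
    ∃ m ∈ Ioo 0 (π / 2), (∀ x ∈ Ioo 0 m, 0 < (1 - c) * (x * sin x) - c * (1 - cos x)) ∧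
      ∀ x ∈ Ioo m (π / 2), (1 - c) * (x * sin x) - c * (1 - cos x) < 0 := by
  have hc₀ : 0 < c := by linarith
  obtain ⟨v₀, hv₀, hK⟩ := exists_tan_div_self_eq (K := 2 * (1 - c) / c)
    (by rw [lt_div_iff₀ hc₀]; linarith)
    (by rw [div_lt_div_iff₀ hc₀ pi_pos]; nlinarith [pi_lt_d2])
  have hv₀' : v₀ ∈ Ioo 0 (π / 2) := ⟨by linarith [hv₀.1], by linarith [hv₀.2, pi_pos]⟩
  have hsign : ∀ v ∈ Ioo 0 (π / 2), 0 < 2 * c * v * sin v * cos v ∧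
      (1 - c) * (2 * v * sin (2 * v)) - c * (1 - cos (2 * v)) =
        2 * c * v * sin v * cos v * (tan v₀ / v₀ - tan v / v) := fun v hv => by
    have hcos : 0 < cos v := cos_pos_of_mem_Ioo ⟨by linarith [hv.1, pi_pos], hv.2⟩
    have hsin : 0 < sin v := sin_pos_of_pos_of_lt_pi hv.1 (by linarith [hv.2, pi_pos])
    exact ⟨by have := hv.1; positivity,
      hK ▸ deriv_logGapNumer_two_mul_eq hc₀.ne' hv.1.ne' hcos.ne'⟩
  refine ⟨2 * v₀, ⟨by linarith [hv₀.1], by linarith [hv₀.2]⟩, fun x hx => ?_, fun x hx => ?_⟩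
  · obtain ⟨v, rfl⟩ : ∃ v, x = 2 * v := ⟨x / 2, by ring⟩
    have hv : v ∈ Ioo 0 (π / 2) := ⟨by linarith [hx.1], by linarith [hx.2, hv₀'.2]⟩
    obtain ⟨hP, heq⟩ := hsign v hv
    rw [heq]
    exact mul_pos hP (sub_pos.2 (strictMonoOn_tan_div_self hv hv₀' (by linarith [hx.2])))
  · obtain ⟨v, rfl⟩ : ∃ v, x = 2 * v := ⟨x / 2, by ring⟩
    have hv : v ∈ Ioo 0 (π / 2) := ⟨by linarith [hx.1, hv₀'.1], by linarith [hx.2, pi_pos]⟩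
    obtain ⟨hP, heq⟩ := hsign v hv
    rw [heq]
    exact mul_neg_of_pos_of_neg hP
      (sub_neg.2 (strictMonoOn_tan_div_self hv₀' hv (by linarith [hx.1])))

lemma exists_logGapNumer_sign_change {c : ℝ} (hc : 16 / 25 < c) (hc' : c < 33 / 50) :
    ∃ x₀ ∈ Ioo 0 (π / 2), (∀ x ∈ Ioo 0 x₀, 0 < logGapNumer c x) ∧
      ∀ x ∈ Ioo x₀ (π / 2), logGapNumer c x < 0 := by
  obtain ⟨m, hm, hpos, hneg⟩ := exists_deriv_logGapNumer_sign_change hc hc'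
  obtain ⟨hmono, hanti⟩ := strictMonoOn_strictAntiOn_of_hasDerivAt
    (continuous_logGapNumer c).continuousOn (fun x _ => hasDerivAt_logGapNumer c x) hpos hneg
    hm.1.le hm.2.le
  have hend : logGapNumer c (π / 2) < 0 := by
    simp only [logGapNumer, sin_pi_div_two, cos_pi_div_two]
    nlinarith [pi_gt_d2]
  obtain ⟨x₀, hx₀, h⟩ := exists_pos_neg_of_strictMonoOn_of_strictAntiOn hmono hanti
    (continuous_logGapNumer c).continuousOn hm.1 hm.2.le (by simp [logGapNumer]) hend
  exact ⟨x₀, ⟨hm.1.trans hx₀.1, hx₀.2⟩, h⟩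

lemma sinc_pos_of_mem_Ico {x : ℝ} (hx : x ∈ Ico 0 π) : 0 < sinc x := by
  rcases hx.1.eq_or_lt with rfl | hx0
  · simp
  · rw [sinc_of_ne_zero hx0.ne']
    exact div_pos (sin_pos_of_pos_of_lt_pi hx0 hx.2) hx0

lemma one_add_cos_div_two_pos {x : ℝ} (hx : x ∈ Ico 0 π) : 0 < (1 + cos x) / 2 := by
  have := cos_lt_cos_of_nonneg_of_le_pi hx.1 le_rfl hx.2
  rw [cos_pi] at this
  linarith

-- `sinc` rather than `sin x / x` makes `logGap c` continuous at `0`, where it vanishes.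
noncomputable def logGap (c x : ℝ) : ℝ := c * log ((1 + cos x) / 2) - log (sinc x)

lemma continuousOn_logGap (c : ℝ) : ContinuousOn (logGap c) (Ico 0 π) :=
  (continuousOn_const.mul (((continuous_const.add continuous_cos).div_const 2).continuousOn.log
    fun _ hx => (one_add_cos_div_two_pos hx).ne')).sub
    (continuous_sinc.continuousOn.log fun _ hx => (sinc_pos_of_mem_Ico hx).ne')

lemma hasDerivAt_logGap (c : ℝ) {x : ℝ} (hx : x ∈ Ioo 0 π) :
    HasDerivAt (logGap c) (logGapNumer c x / (x * sin x)) x := by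
  have hsin : 0 < sin x := sin_pos_of_pos_of_lt_pi hx.1 hx.2
  have hsinc : sinc =ᶠ[𝓝 x] fun y => sin y / y :=
    (eventually_ne_nhds hx.1.ne').mono fun y hy => sinc_of_ne_zero hy
  have hA := (one_add_cos_div_two_pos (Ioo_subset_Ico_self hx)).ne'
  have h : HasDerivAt (logGap c) (c * (-sin x / 2 / ((1 + cos x) / 2)) -
      (cos x * x - sin x * 1) / x ^ 2 / (sin x / x)) x := by
    have hlogsinc := (((hasDerivAt_sin x).div (hasDerivAt_id' x) hx.1.ne').congr_of_eventuallyEq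
      hsinc).log (sinc_pos_of_mem_Ico (Ioo_subset_Ico_self hx)).ne'
    rw [sinc_of_ne_zero hx.1.ne'] at hlogsinc
    exact ((((hasDerivAt_cos x).const_add 1).div_const 2).log hA).const_mul c |>.sub hlogsinc
  refine h.congr_deriv ?_
  have hsin_sq : sin x ^ 2 / (1 + cos x) = 1 - cos x := by
    rw [div_eq_iff (by contrapose! hA; rw [hA]; simp), sin_sq]; ring
  rw [logGapNumer]
  field_simp
  rw [mul_div_assoc, hsin_sq]
  field_simp [hx.1.ne']
  ring

lemma logGap_zero (c : ℝ) : logGap c 0 = 0 := by simp [logGap]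

lemma logGap_pi_div_two (c : ℝ) : logGap c (π / 2) = log (π / 2) - c * log 2 := by
  rw [logGap, cos_pi_div_two, sinc_of_ne_zero (by positivity), sin_pi_div_two, add_zero,
    one_div_div, one_div, log_inv, ← inv_div, log_inv]
  ring

lemma logGap_pos {c : ℝ} (hc : 16 / 25 < c) (hc' : c < 33 / 50) (hc₀ : c * log 2 ≤ log (π / 2))
    {x : ℝ} (hx : x ∈ Ioo 0 (π / 2)) : 0 < logGap c x := by
  obtain ⟨x₀, hx₀, hpos, hneg⟩ := exists_logGapNumer_sign_change hc hc'
  have hden : ∀ y ∈ Ioo 0 (π / 2), 0 < y * sin y := fun y hy =>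
    mul_pos hy.1 (sin_pos_of_pos_of_lt_pi hy.1 (by linarith [hy.2, pi_pos]))
  obtain ⟨hmono, hanti⟩ := strictMonoOn_strictAntiOn_of_hasDerivAt
    ((continuousOn_logGap c).mono (Icc_subset_Ico_right (by linarith [pi_pos])))
    (fun y hy => hasDerivAt_logGap c ⟨hy.1, by linarith [hy.2, pi_pos]⟩)
    (fun y hy => div_pos (hpos y hy) (hden y ⟨hy.1, hy.2.trans hx₀.2⟩))
    (fun y hy => div_neg_of_neg_of_pos (hneg y hy) (hden y ⟨hx₀.1.trans hy.1, hy.2⟩))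
    hx₀.1.le hx₀.2.le
  exact pos_of_strictMonoOn_of_strictAntiOn hmono hanti (logGap_zero c).ge
    (by rw [logGap_pi_div_two]; linarith) hx

lemma sin_div_self_lt_rpow {c : ℝ} (hc : 16 / 25 < c) (hc' : c < 33 / 50)
    (hc₀ : c * log 2 ≤ log (π / 2)) {x : ℝ} (hx : x ∈ Ioo 0 (π / 2)) :
    sin x / x < ((1 + cos x) / 2) ^ c := by
  have h := logGap_pos hc hc' hc₀ hx
  rw [logGap, sinc_of_ne_zero hx.1.ne'] at h
  have hsin : 0 < sin x := sin_pos_of_pos_of_lt_pi hx.1 (by linarith [hx.2, pi_pos])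
  rw [lt_rpow_iff_log_lt (div_pos hsin hx.1)
    (one_add_cos_div_two_pos ⟨hx.1.le, by linarith [hx.2, pi_pos]⟩)]
  linarith

lemma log_pi_div_two_div_log_two_mem :
    log (π / 2) / log 2 ∈ Ioo (16 / 25) (33 / 50) := by
  have hlog2 : 0 < log 2 := log_pos one_lt_two
  constructor
  · rw [lt_div_iff₀ hlog2]
    have : (2 : ℝ) ^ 16 < (π / 2) ^ 25 :=
      calc (2 : ℝ) ^ 16 < (3.14 / 2) ^ 25 := by norm_num
        _ ≤ (π / 2) ^ 25 := by gcongr; exact pi_gt_d2.le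
    have := log_lt_log (by positivity) this
    simp only [log_pow, Nat.cast_ofNat] at this
    linarith
  · rw [div_lt_iff₀ hlog2]
    have : (π / 2) ^ 50 < (2 : ℝ) ^ 33 :=
      calc (π / 2) ^ 50 ≤ (3.15 / 2) ^ 50 := by gcongr; exact pi_lt_d2.le
        _ < 2 ^ 33 := by norm_num
    have := log_lt_log (by positivity) this
    simp only [log_pow, Nat.cast_ofNat] at this
    linarith

theorem sin_div_pow_bounds (x : ℝ) (hx : x ∈ Ioo 0 (π/2)) :
    ((1 + cos x) / 2) ^ ((2 : ℝ)/3) < sin x / x ∧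
    sin x / x < ((1 + cos x) / 2) ^ (log (π/2) / log 2) := by
  obtain ⟨hc, hc'⟩ := log_pi_div_two_div_log_two_mem
  exact ⟨one_add_cos_div_two_rpow_lt_sin_div_self hx.1 (by linarith [hx.2, pi_pos]),
    sin_div_self_lt_rpow hc hc' (div_mul_cancel₀ _ (log_pos one_lt_two).ne').le hx⟩
end
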